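/- Let A be a finite abelian p-group with decomposition A = A₁ ⊕ ⋯ ⊕ A_k into homocyclic components of pairwise distinct exponents, and let Λ : End(A) → End(A₁/pA₁) ⊕ ⋯ ⊕ End(A_k/pA_k) be the natural ring homomorphism induced by the diagonal entries. Then the kernel J of Λ equals the Jacobson radical of End(A), and consists precisely of those matrices (u_ij) whose diagonal entries u_ii lie in p·Hom(A_i, A_i). -/

import Mathlib

/-- The subgroup `pA = {p • x : x ∈ A}` of an abelian group `A`. -/
def pSub (p : ℕ) (A : Type) [AddCommGroup A] : AddSubgroup A :=
  AddMonoidHom.range (p • AddMonoidHom.id A)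

section Aux

variable {p : ℕ}

lemma mem_pSub_iff {A : Type} [AddCommGroup A] {x : A} :
    x ∈ pSub p A ↔ ∃ y, x = p • y := by
  constructor
  · rintro ⟨y, hy⟩
    exact ⟨y, by simpa using hy.symm⟩
  · rintro ⟨y, rfl⟩
    exact ⟨y, by simp⟩

lemma nsmul_mod_eq {A : Type} [AddCommGroup A] {N : ℕ} {y : A} (h : N • y = 0) (n : ℕ) :
    (n % N) • y = n • y := by
  conv_rhs => rw [← Nat.div_add_mod n N]
  rw [add_nsmul, mul_comm, mul_smul, h, smul_zero, zero_add]

variable {B : Type} [AddCommGroup B] {mB E : ℕ}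

lemma single_val_smul (hp : p.Prime) (c : ZMod (p ^ E)) (j : Fin mB) :
    (c.val) • (Pi.single j 1 : Fin mB → ZMod (p ^ E)) = Pi.single j c := by
  haveI : NeZero (p ^ E) := ⟨pow_ne_zero _ hp.ne_zero⟩
  funext j1
  rcases eq_or_ne j1 j with rfl | h
  · simp [nsmul_eq_mul, ZMod.natCast_zmod_val]
  · simp [Pi.single_eq_of_ne h]

lemma pi_decomp (hp : p.Prime) (φ : B ≃+ (Fin mB → ZMod (p ^ E))) (x : B) :
    x = ∑ j, ((φ x j).val) • φ.symm (Pi.single j 1) := by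
  apply φ.injective
  rw [map_sum]
  simp only [map_nsmul, AddEquiv.apply_symm_apply]
  simp only [single_val_smul hp]
  funext j0
  rw [Finset.sum_apply]
  exact (Fintype.sum_pi_single j0 (φ x)).symm

lemma sum_val_smul_add (hp : p.Prime) {C : Type} [AddCommGroup C]
    (φ : B ≃+ (Fin mB → ZMod (p ^ E))) (z : Fin mB → C) (hz : ∀ j, p ^ E • z j = 0)
    (a b : B) :
    ∑ j, ((φ (a + b) j).val) • z j
      = (∑ j, ((φ a j).val) • z j) + ∑ j, ((φ b j).val) • z j := by
  haveI : NeZero (p ^ E) := ⟨pow_ne_zero _ hp.ne_zero⟩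
  rw [← Finset.sum_add_distrib]
  refine Finset.sum_congr rfl fun j _ => ?_
  rw [map_add, Pi.add_apply, ZMod.val_add, nsmul_mod_eq (hz j), add_nsmul]

lemma hom_divide (hp : p.Prime) (φ : B ≃+ (Fin mB → ZMod (p ^ E)))
    (htor : ∀ x : B, p ^ E • x = 0)
    (u : B →+ B) (hu : ∀ x, ∃ y, u x = p • y) :
    ∃ v : B →+ B, ∀ x, u x = p • v x := by
  choose y hy using fun j => hu (φ.symm (Pi.single j 1))
  refine ⟨AddMonoidHom.mk' (fun x => ∑ j, ((φ x j).val) • y j)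
    (sum_val_smul_add hp φ y (fun j => htor (y j))), fun x => ?_⟩
  rw [AddMonoidHom.mk'_apply, Finset.smul_sum]
  conv_lhs => rw [pi_decomp hp φ x, map_sum]
  refine Finset.sum_congr rfl fun j _ => ?_
  rw [map_nsmul, hy j, smul_comm]

lemma hom_lift (hp : p.Prime) (φ : B ≃+ (Fin mB → ZMod (p ^ E)))
    (htor : ∀ x : B, p ^ E • x = 0)
    {V : Type} [AddCommGroup V] (q : B →+ V) (hq : Function.Surjective q)
    (ψ : V →+ V) : ∃ r : B →+ B, ∀ x, q (r x) = ψ (q x) := by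
  choose z hz using fun j => hq (ψ (q (φ.symm (Pi.single j 1))))
  refine ⟨AddMonoidHom.mk' (fun x => ∑ j, ((φ x j).val) • z j)
    (sum_val_smul_add hp φ z (fun j => htor (z j))), fun x => ?_⟩
  rw [AddMonoidHom.mk'_apply, map_sum]
  conv_rhs => rw [pi_decomp hp φ x, map_sum, map_sum]
  refine Finset.sum_congr rfl fun j _ => ?_
  rw [map_nsmul, hz j, map_nsmul, map_nsmul]

lemma pdvd_of_torsion (hp : p.Prime) (φ : B ≃+ (Fin mB → ZMod (p ^ E)))
    {a : ℕ} (ha : a < E) {x : B} (hx : p ^ a • x = 0) :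
    ∃ y, x = p • y := by
  haveI : NeZero (p ^ E) := ⟨pow_ne_zero _ hp.ne_zero⟩
  have hcomp : ∀ j, ∃ d, φ x j = p • d := by
    intro j
    have h1 : p ^ a • φ x j = 0 := by
      have h2 : φ (p ^ a • x) j = 0 := by rw [hx, map_zero]; rfl
      rw [map_nsmul] at h2
      exact h2
    set c := φ x j with hc
    have h2 : ((p ^ a * c.val : ℕ) : ZMod (p ^ E)) = 0 := by
      push_cast
      rw [ZMod.natCast_zmod_val]
      rw [nsmul_eq_mul] at h1
      push_cast at h1
      exact h1
    rw [ZMod.natCast_eq_zero_iff] at h2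
    have h3 : p ∣ c.val := by
      have hd : p ^ a * p ∣ p ^ a * c.val := by
        refine dvd_trans ?_ h2
        rw [← pow_succ]
        exact pow_dvd_pow p ha
      exact (mul_dvd_mul_iff_left (pow_ne_zero a hp.ne_zero)).mp hd
    obtain ⟨d0, hd0⟩ := h3
    refine ⟨(d0 : ZMod (p ^ E)), ?_⟩
    rw [← ZMod.natCast_zmod_val c, hd0]
    push_cast
    rw [nsmul_eq_mul]
  choose d hd using hcomp
  refine ⟨φ.symm d, ?_⟩
  apply φ.injective
  rw [map_nsmul, AddEquiv.apply_symm_apply]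
  funext j
  rw [hd j, Pi.smul_apply]

end Aux

/-- With `A = A₁ ⊕ ⋯ ⊕ A_k` a finite abelian `p`-group with homocyclic
components of pairwise distinct exponents and `Λ : End(A) → ⊕ᵢ End(Aᵢ/pAᵢ)` the natural ring
homomorphism induced by diagonal entries, the kernel `J` of `Λ` equals the Jacobson radical of
`End(A)`, and consists precisely of the endomorphisms whose diagonal entries lie in
`p • Hom(Aᵢ, Aᵢ)`. -/
theorem stmt5 (p : ℕ) (hp : p.Prime) (k : ℕ) (A : Fin k → Type)
    [∀ i, AddCommGroup (A i)] [∀ i, Fintype (A i)]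
    (e m : Fin k → ℕ)
    (hA : ∀ i, Nonempty (A i ≃+ (Fin (m i) → ZMod (p ^ e i))))
    (hexp : ∀ i, AddMonoid.exponent (A i) = p ^ e i)
    (hdist : ∀ i j, i ≠ j → e i ≠ e j)
    (Λ : AddMonoid.End (∀ i, A i) →+* (∀ i, AddMonoid.End (A i ⧸ pSub p (A i))))
    (hΛ : ∀ (U : AddMonoid.End (∀ i, A i)) (i : Fin k) (x : A i),
      Λ U i ((QuotientAddGroup.mk x : A i ⧸ pSub p (A i))) =
        (QuotientAddGroup.mk (U (Pi.single i x) i) : A i ⧸ pSub p (A i))) :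
    RingHom.ker Λ = Ideal.jacobson (⊥ : Ideal (AddMonoid.End (∀ i, A i))) ∧
    (∀ U : AddMonoid.End (∀ i, A i),
      Λ U = 0 ↔ ∀ i, ∃ v : A i →+ A i, ∀ x : A i, U (Pi.single i x) i = p • v x) := by
  classical
  let φ : ∀ i, A i ≃+ (Fin (m i) → ZMod (p ^ e i)) := fun i => (hA i).some
  have tor : ∀ (i : Fin k) (x : A i), p ^ e i • x = 0 := by
    intro i x
    rw [← hexp i]
    exact AddMonoid.exponent_nsmul_eq_zero x
  have einj : Function.Injective e := by
    intro i j hij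
    by_contra h
    exact hdist i j h hij
  -- part 2, forward direction per component
  have hdiag : ∀ (U : AddMonoid.End (∀ i, A i)) (i : Fin k),
      (Λ U) i = 0 → ∃ v : A i →+ A i, ∀ x : A i, U (Pi.single i x) i = p • v x := by
    intro U i h0
    have hadd : ∀ a b : A i,
        U (Pi.single i (a + b)) i = U (Pi.single i a) i + U (Pi.single i b) i := by
      intro a b
      rw [Pi.single_add, map_add]
      rfl
    obtain ⟨v, hv⟩ := hom_divide hp (φ i) (tor i)
      (AddMonoidHom.mk' (fun x => U (Pi.single i x) i) hadd) (by
        intro x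
        have hx := hΛ U i x
        rw [h0, AddMonoid.End.zero_apply] at hx
        have h1 : (QuotientAddGroup.mk (U (Pi.single i x) i) : A i ⧸ pSub p (A i)) = 0 :=
          hx.symm
        rw [QuotientAddGroup.eq_zero_iff] at h1
        exact mem_pSub_iff.mp h1)
    exact ⟨v, fun x => hv x⟩
  have part2 : ∀ U : AddMonoid.End (∀ i, A i),
      Λ U = 0 ↔ ∀ i, ∃ v : A i →+ A i, ∀ x : A i, U (Pi.single i x) i = p • v x := by
    intro U
    constructor
    · intro h i
      exact hdiag U i (by rw [h]; rfl)
    · intro h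
      funext i
      rw [Pi.zero_apply]
      refine AddMonoid.End.ext _ fun q => ?_
      obtain ⟨x, rfl⟩ := QuotientAddGroup.mk_surjective q
      rw [hΛ, AddMonoid.End.zero_apply]
      obtain ⟨v, hv⟩ := h i
      rw [hv x, QuotientAddGroup.eq_zero_iff]
      exact mem_pSub_iff.mpr ⟨v x, rfl⟩
  -- sums of p^n-divisible elements are p^n-divisible
  have sum_div : ∀ (i : Fin k) (n : ℕ) (S : Finset (Fin k)) (f : Fin k → A i),
      (∀ j ∈ S, ∃ z, f j = p ^ n • z) → ∃ z, ∑ j ∈ S, f j = p ^ n • z := by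
    intro i n S f hf
    induction S using Finset.induction with
    | empty => exact ⟨0, by simp⟩
    | @insert a s ha ih =>
      obtain ⟨z1, hz1⟩ := hf a (Finset.mem_insert_self a s)
      obtain ⟨z2, hz2⟩ := ih (fun j hj => hf j (Finset.mem_insert_of_mem hj))
      exact ⟨z1 + z2, by rw [Finset.sum_insert ha, hz1, hz2, smul_add]⟩
  -- every element of the kernel is nilpotent
  have nilp : ∀ v : AddMonoid.End (∀ i, A i), Λ v = 0 → IsNilpotent v := by
    intro v hv
    choose w hw using (part2 v).mp hv
    have happ : ∀ (x : ∀ i, A i) (i : Fin k), v x i = ∑ j, v (Pi.single j (x j)) i := by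
      intro x i
      have hx : x = ∑ j, Pi.single j (x j) := by
        funext i0
        rw [Finset.sum_apply]
        exact (Fintype.sum_pi_single i0 x).symm
      conv_lhs => rw [hx]
      rw [map_sum, Finset.sum_apply]
    have KS : ∀ (t c s : ℕ) (y : ∀ i, A i),
        (Finset.univ.filter (fun i => e i < c)).card ≤ t →
        (∀ i, c ≤ e i → ∃ z, p ^ s • y i = p ^ (s + 1) • z) →
        ∀ i, ∃ z, (v ^ t) (p ^ s • y) i = p ^ (s + 1) • z := by
      intro t
      induction t with
      | zero =>
        intro c s y hcard hy i
        have hall : ∀ i, c ≤ e i := by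
          intro i
          by_contra h
          have hmem : i ∈ Finset.univ.filter (fun i => e i < c) := by
            simp [lt_of_not_ge h]
          have := Finset.card_pos.mpr ⟨i, hmem⟩
          omega
        obtain ⟨z, hz⟩ := hy i (hall i)
        refine ⟨z, ?_⟩
        rw [pow_zero]
        rw [show ((1 : AddMonoid.End (∀ i, A i)) (p ^ s • y)) = p ^ s • y from rfl]
        rw [Pi.smul_apply]
        exact hz
      | succ t ih =>
        intro c s y hcard hy
        by_cases hall : ∀ i, c ≤ e i
        · choose z hz using fun i => hy i (hall i)
          have hx : p ^ s • y = p ^ (s + 1) • z := by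
            funext i
            rw [Pi.smul_apply, hz i, Pi.smul_apply]
          intro i
          refine ⟨(v ^ (t + 1)) z i, ?_⟩
          rw [hx, map_nsmul, Pi.smul_apply]
        · push_neg at hall
          obtain ⟨i0gen, hi0gen⟩ := hall
          set S := Finset.univ.filter (fun i => e i < c) with hS
          have hSne : S.Nonempty := ⟨i0gen, by simp [hS, hi0gen]⟩
          obtain ⟨i0, hi0S, hi0⟩ := Finset.exists_mem_eq_sup' hSne e
          set c' := S.sup' hSne e with hc'
          have step : ∀ i, c' ≤ e i → ∃ z, (v (p ^ s • y)) i = p ^ (s + 1) • z := by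
            intro i hi
            rw [happ]
            apply sum_div i (s + 1)
            intro j _
            rcases eq_or_ne j i with rfl | hne
            · refine ⟨w j (y j), ?_⟩
              have h1 : Pi.single j ((p ^ s • y) j) = p ^ s • Pi.single j (y j) := by
                rw [Pi.smul_apply, Pi.single_smul]
              rw [h1, map_nsmul, Pi.smul_apply, hw j (y j), smul_smul, ← pow_succ]
            · by_cases hcj : c ≤ e j
              · obtain ⟨z, hz⟩ := hy j hcj
                refine ⟨v (Pi.single j z) i, ?_⟩
                have h1 : Pi.single j ((p ^ s • y) j) = p ^ (s + 1) • Pi.single j z := by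
                  rw [Pi.smul_apply, hz, Pi.single_smul]
                rw [h1, map_nsmul, Pi.smul_apply]
              · push_neg at hcj
                have hjS : e j ≤ c' := Finset.le_sup' e (by simp [hS, hcj])
                have hji : e j < e i :=
                  lt_of_le_of_ne (le_trans hjS hi) (fun hh => hne (einj hh))
                have ha : p ^ e j • v (Pi.single j (y j)) i = 0 := by
                  calc p ^ e j • v (Pi.single j (y j)) i
                      = v (p ^ e j • Pi.single j (y j)) i := by
                        rw [map_nsmul, Pi.smul_apply]
                    _ = v (Pi.single j (p ^ e j • y j)) i := by rw [Pi.single_smul]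
                    _ = 0 := by rw [tor j, Pi.single_zero, map_zero]; rfl
                obtain ⟨b, hb⟩ := pdvd_of_torsion hp (φ i) hji ha
                refine ⟨b, ?_⟩
                have h1 : Pi.single j ((p ^ s • y) j) = p ^ s • Pi.single j (y j) := by
                  rw [Pi.smul_apply, Pi.single_smul]
                rw [h1, map_nsmul, Pi.smul_apply, hb, smul_smul, ← pow_succ]
          have hcard' : (Finset.univ.filter (fun i => e i < c')).card ≤ t := by
            have hi0c : e i0 < c := by
              have := hi0S
              rw [hS] at this
              simpa using this
            have hsub : Finset.univ.filter (fun i => e i < c') ⊆ S.erase i0 := by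
              intro i hi
              have hi' : e i < c' := by simpa using hi
              rw [hi0] at hi'
              have h2 : e i < c := lt_trans hi' hi0c
              rw [Finset.mem_erase]
              refine ⟨fun hEq => ?_, ?_⟩
              · rw [hEq] at hi'
                exact lt_irrefl _ hi'
              · rw [hS]
                simp only [Finset.mem_filter, Finset.mem_univ, true_and]
                exact h2
            have h1 : (Finset.univ.filter (fun i => e i < c')).card ≤ S.card - 1 := by
              calc (Finset.univ.filter (fun i => e i < c')).card
                  ≤ (S.erase i0).card := Finset.card_le_card hsub
                _ = S.card - 1 := Finset.card_erase_of_mem hi0S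
            have h2 : 1 ≤ S.card := Finset.card_pos.mpr hSne
            omega
          have hy' : ∀ i, c' ≤ e i → ∃ z, p ^ s • (v y) i = p ^ (s + 1) • z := by
            intro i hi
            obtain ⟨z, hz⟩ := step i hi
            refine ⟨z, ?_⟩
            rw [← hz, map_nsmul, Pi.smul_apply]
          intro i
          obtain ⟨z, hz⟩ := ih c' s (v y) hcard' hy' i
          refine ⟨z, ?_⟩
          rw [← hz]
          have hcomp : (v ^ (t + 1)) (p ^ s • y) = (v ^ t) (p ^ s • (v y)) := by
            rw [pow_succ]
            rw [show ((v ^ t * v) (p ^ s • y)) = (v ^ t) (v (p ^ s • y)) from rfl]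
            rw [map_nsmul]
          rw [hcomp]
    have iter : ∀ s : ℕ, ∀ x : ∀ i, A i, ∃ z, (v ^ (s * k)) x = p ^ s • z := by
      intro s
      induction s with
      | zero => intro x; exact ⟨x, by simp⟩
      | succ s ih =>
        intro x
        obtain ⟨z, hz⟩ := ih x
        have hKS := KS k (Finset.univ.sup e + 1) s z
          (by
            calc (Finset.univ.filter (fun i => e i < Finset.univ.sup e + 1)).card
                ≤ Finset.univ.card := Finset.card_le_card (Finset.filter_subset _ _)
              _ = k := by simp)
          (by
            intro i hi
            exfalso
            have := Finset.le_sup (f := e) (Finset.mem_univ i)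
            omega)
        choose z2 hz2 using hKS
        refine ⟨z2, ?_⟩
        have hpow : (v ^ ((s + 1) * k)) x = (v ^ k) ((v ^ (s * k)) x) := by
          rw [show (s + 1) * k = k + s * k by ring, pow_add]
          rfl
        rw [hpow, hz]
        funext i
        rw [Pi.smul_apply]
        exact hz2 i
    refine ⟨Finset.univ.sup e * k, ?_⟩
    refine AddMonoid.End.ext _ fun x => ?_
    obtain ⟨z, hz⟩ := iter (Finset.univ.sup e) x
    rw [show ((0 : AddMonoid.End (∀ i, A i)) x) = 0 from rfl]
    rw [hz]
    funext i
    rw [Pi.smul_apply, Pi.zero_apply]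
    have hE : e i ≤ Finset.univ.sup e := Finset.le_sup (Finset.mem_univ i)
    calc p ^ Finset.univ.sup e • z i
        = p ^ (Finset.univ.sup e - e i) • (p ^ e i • z i) := by
          rw [smul_smul, ← pow_add, Nat.sub_add_cancel hE]
      _ = 0 := by rw [tor i, smul_zero]
  -- quasi-invertibility from Jacobson membership
  have quasi : ∀ u ∈ Ideal.jacobson (⊥ : Ideal (AddMonoid.End (∀ i, A i))),
      ∀ r : AddMonoid.End (∀ i, A i), ∃ s, s * (1 - r * u) = 1 := by
    intro u hu r
    by_cases hI : Ideal.span {1 - r * u} = (⊤ : Ideal (AddMonoid.End (∀ i, A i)))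
    · have h1 : (1 : AddMonoid.End (∀ i, A i)) ∈ Ideal.span {1 - r * u} := by
        rw [hI]; trivial
      obtain ⟨s, hs⟩ := Submodule.mem_span_singleton.mp h1
      exact ⟨s, hs⟩
    · obtain ⟨M, hM, hle⟩ := Ideal.exists_le_maximal _ hI
      exfalso
      have huM : u ∈ M := by
        rw [Ideal.jacobson] at hu
        exact Submodule.mem_sInf.mp hu M ⟨bot_le, hM⟩
      have ha : (1 - r * u) ∈ M := hle (Ideal.subset_span (Set.mem_singleton _))
      have hb : r * u ∈ M := M.smul_mem r huM
      have h1M : (1 : AddMonoid.End (∀ i, A i)) ∈ M := by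
        have := M.add_mem ha hb
        simpa using this
      exact hM.ne_top ((Ideal.eq_top_iff_one M).mpr h1M)
  -- kernel ≤ jacobson
  have ker_le : RingHom.ker Λ ≤ Ideal.jacobson (⊥ : Ideal (AddMonoid.End (∀ i, A i))) := by
    intro v hv
    rw [Ideal.jacobson]
    rw [Submodule.mem_sInf]
    rintro M ⟨-, hM⟩
    by_contra hvM
    have hlt : M < M ⊔ Ideal.span {v} := by
      refine lt_of_le_of_ne le_sup_left ?_
      intro hEq
      have hvmem : v ∈ M ⊔ Ideal.span {v} :=
        Submodule.mem_sup_right (Ideal.subset_span (Set.mem_singleton v))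
      rw [← hEq] at hvmem
      exact hvM hvmem
    have htop : M ⊔ Ideal.span {v} = ⊤ := hM.1.2 _ hlt
    have h1 : (1 : AddMonoid.End (∀ i, A i)) ∈ M ⊔ Ideal.span {v} := by
      rw [htop]; trivial
    obtain ⟨a, haM, b, hb, hab⟩ := Submodule.mem_sup.mp h1
    obtain ⟨cc, rfl⟩ := Submodule.mem_span_singleton.mp hb
    have hnil : IsNilpotent (cc * v) := by
      apply nilp
      rw [map_mul, RingHom.mem_ker.mp hv, mul_zero]
    have hunit : IsUnit a := by
      have haeq : a = 1 - cc * v := eq_sub_of_add_eq hab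
      rw [haeq]
      exact hnil.isUnit_one_sub
    exact hM.ne_top (Ideal.eq_top_of_isUnit_mem M haM hunit)
  -- jacobson ≤ kernel
  have jac_le : Ideal.jacobson (⊥ : Ideal (AddMonoid.End (∀ i, A i))) ≤ RingHom.ker Λ := by
    intro u hu
    rw [RingHom.mem_ker]
    funext i
    rw [Pi.zero_apply]
    by_contra hne
    have hex : ∃ vb, (Λ u) i vb ≠ 0 := by
      by_contra hall
      push_neg at hall
      exact hne (AddMonoidHom.ext hall)
    obtain ⟨vb, hvb⟩ := hex
    haveI := Fact.mk hp
    haveI instV : Module (ZMod p) (A i ⧸ pSub p (A i)) :=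
      QuotientAddGroup.zmodModule (fun x => mem_pSub_iff.mpr ⟨x, rfl⟩)
    set wb := (Λ u) i vb with hwb
    let f : ZMod p →ₗ[ZMod p] (A i ⧸ pSub p (A i)) :=
      LinearMap.toSpanSingleton (ZMod p) _ wb
    have hfker : LinearMap.ker f = (⊥ : Submodule (ZMod p) (ZMod p)) := by
      rw [eq_bot_iff]
      rintro c hc
      have hc' : c • wb = 0 := hc
      rcases smul_eq_zero.mp hc' with h | h
      · exact (Submodule.mem_bot (ZMod p)).mpr h
      · exact absurd h hvb
    obtain ⟨g, hg⟩ := f.exists_leftInverse_of_injective hfker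
    set ψlin : (A i ⧸ pSub p (A i)) →ₗ[ZMod p] (A i ⧸ pSub p (A i)) :=
      (LinearMap.toSpanSingleton (ZMod p) _ vb).comp g with hψlin
    have hψ : ψlin wb = vb := by
      have h1 : g wb = 1 := by
        have h2 := LinearMap.congr_fun hg 1
        simpa [f, LinearMap.toSpanSingleton_apply] using h2
      simp [hψlin, LinearMap.toSpanSingleton_apply, h1]
    obtain ⟨ri, hri⟩ := hom_lift hp (φ i) (tor i)
      (QuotientAddGroup.mk' (pSub p (A i))) (QuotientAddGroup.mk'_surjective _)
      ψlin.toAddMonoidHom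
    let r : AddMonoid.End (∀ i', A i') := AddMonoidHom.mk'
      (fun x => Pi.single i (ri (x i))) (by
        intro a b
        simp only [Pi.add_apply, map_add, Pi.single_add])
    obtain ⟨s, hs⟩ := quasi u hu r
    have hs' := congrArg Λ hs
    rw [map_mul, map_sub, map_mul, map_one] at hs'
    have hi' := congrFun hs' i
    rw [Pi.mul_apply, Pi.sub_apply, Pi.one_apply, Pi.mul_apply] at hi'
    have happ := DFunLike.congr_fun hi' vb
    have hrw : (Λ r) i wb = vb := by
      obtain ⟨xw, hxw⟩ := QuotientAddGroup.mk_surjective wb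
      rw [← hxw, hΛ r i xw]
      have hval : r (Pi.single i xw) i = ri xw := by
        show Pi.single i (ri (Pi.single i xw i)) i = ri xw
        rw [Pi.single_eq_same, Pi.single_eq_same]
      rw [hval]
      have h3 := hri xw
      rw [QuotientAddGroup.mk'_apply, QuotientAddGroup.mk'_apply] at h3
      rw [h3]
      show ψlin (QuotientAddGroup.mk xw) = vb
      rw [hxw, hψ]
    have hzero : ((1 : AddMonoid.End (A i ⧸ pSub p (A i))) - (Λ r) i * (Λ u) i) vb = 0 := by
      rw [show ((1 : AddMonoid.End (A i ⧸ pSub p (A i))) - (Λ r) i * (Λ u) i) vb = (1 : AddMonoid.End (A i ⧸ pSub p (A i))) vb - ((Λ r) i * (Λ u) i) vb from rfl]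
      rw [show ((1 : AddMonoid.End (A i ⧸ pSub p (A i))) vb) = vb from rfl]
      rw [show (((Λ r) i * (Λ u) i) vb) = (Λ r) i ((Λ u) i vb) from rfl]
      rw [← hwb, hrw, sub_self]
    rw [show (((Λ s) i * ((1 : AddMonoid.End (A i ⧸ pSub p (A i))) - (Λ r) i * (Λ u) i)) vb)
        = (Λ s) i (((1 : AddMonoid.End (A i ⧸ pSub p (A i))) - (Λ r) i * (Λ u) i) vb)
        from rfl] at happ
    rw [hzero, map_zero] at happ
    rw [show ((1 : AddMonoid.End (A i ⧸ pSub p (A i))) vb) = vb from rfl] at happ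
    apply hvb
    rw [hwb, ← happ, map_zero]
  exact ⟨le_antisymm ker_le jac_le, part2⟩
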